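/- In a simultaneous second-price auction (complete-information, pure-strategy version) with strong no-overbidding: if b is a pure Nash equilibrium in which each bidder's bid vector b_i is dominated by v_i, and each v_i is monotone subadditive, then Σ_i v_i(W_i(b)) ≥ (1/2)·max over partitions (O₁,...,O_n) of Σ_i v_i(O_i) − Σ_j max_k b_k(j), and consequently, since Σ_j max_k b_k(j) ≤ Σ_i v_i(W_i(b)) under strong no-overbidding, the welfare at equilibrium is at least 1/4 of the optimum. -/

import Mathlib

/-! Against fixed prices, repeatedly discarding a subset `S` priced above its value `v S`
strictly raises the utility `v T - ∑ j ∈ T, p j`, because subadditivity gives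
`v (T \ S) ≥ v T - v S`. The process stops at a set on which paying the prices is a
no-overbidding bid, and bidding exactly those prices there wins at least that set. A bidder
at equilibrium therefore gets at least `v i (O i)` minus the competing bids on `O i`; summing
over a partition and using that the winning bids are dominated by the winners' values gives
`OPT - ∑ j, maxAll b j ≤ welfare` and `∑ j, maxAll b j ≤ welfare`. -/

open Finset

/-- The highest bid on item `j` among the bidders other than `i` (bids assumed nonnegative). -/
noncomputable def maxOther {n m : ℕ} (b : Fin n → Fin m → ℝ) (i : Fin n) (j : Fin m) : ℝ :=
  (((Finset.univ.erase i).sup fun k => Real.toNNReal (b k j) : NNReal) : ℝ)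

/-- The highest bid on item `j` (bids assumed nonnegative). -/
noncomputable def maxAll {n m : ℕ} (b : Fin n → Fin m → ℝ) (j : Fin m) : ℝ :=
  ((Finset.univ.sup fun k => Real.toNNReal (b k j) : NNReal) : ℝ)

section NoOverbidding

variable {α : Type*} [DecidableEq α] {v : Finset α → ℝ}

theorem exists_subset_sum_le_and_utility_le (hv₀ : 0 ≤ v ∅)
    (hsub : ∀ S T, v (S ∪ T) ≤ v S + v T) (p : α → ℝ) (T : Finset α) :
    ∃ U ⊆ T, (∀ S ⊆ U, ∑ j ∈ S, p j ≤ v S) ∧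
      v T - ∑ j ∈ T, p j ≤ v U - ∑ j ∈ U, p j := by
  induction T using Finset.strongInduction with
  | H T ih =>
    by_cases hdom : ∀ S ⊆ T, ∑ j ∈ S, p j ≤ v S
    · exact ⟨T, subset_rfl, hdom, le_rfl⟩
    push Not at hdom
    obtain ⟨S, hST, hS⟩ := hdom
    have hSne : S.Nonempty := by
      rw [nonempty_iff_ne_empty]
      rintro rfl
      simp only [sum_empty] at hS
      linarith
    obtain ⟨U, hUT, hUdom, hU⟩ := ih (T \ S) (sdiff_ssubset hST hSne)
    refine ⟨U, hUT.trans sdiff_subset, hUdom, ?_⟩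
    have hvT : v T ≤ v (T \ S) + v S := by
      simpa only [sdiff_union_of_subset hST] using hsub (T \ S) S
    have hpT := sum_sdiff hST (f := p)
    linarith

variable [Fintype α]

theorem exists_bid_le_and_utility_le_of_sum_le (hmono : ∀ S T, S ⊆ T → v S ≤ v T)
    {p : α → ℝ} (hp : ∀ j, 0 ≤ p j) {T : Finset α} (hT : ∀ S ⊆ T, ∑ j ∈ S, p j ≤ v S) :
    ∃ c : α → ℝ, (∀ j, 0 ≤ c j) ∧ (∀ S, ∑ j ∈ S, c j ≤ v S) ∧
      v T - ∑ j ∈ T, p j ≤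
        v (univ.filter fun j => p j ≤ c j) - ∑ j ∈ univ.filter (fun j => p j ≤ c j), p j := by
  refine ⟨fun j => if j ∈ T then p j else 0, fun j => ite_nonneg (hp j) le_rfl, ?_, ?_⟩
  · intro S
    rw [sum_ite_mem]
    exact (hT _ inter_subset_right).trans (hmono _ _ inter_subset_left)
  · set A := univ.filter fun j => p j ≤ if j ∈ T then p j else 0
    have hTA : T ⊆ A := fun j hj => by simp [A, hj]
    have hpA : ∑ j ∈ A \ T, p j = 0 :=
      sum_eq_zero fun j hj => by
        have hj' := mem_sdiff.1 hj
        have hle : p j ≤ 0 := by simpa [A, hj'.2] using hj'.1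
        exact le_antisymm hle (hp j)
    have hsum := sum_sdiff hTA (f := p)
    linarith [hmono T A hTA]

theorem exists_bid_le_and_utility_le (hv₀ : 0 ≤ v ∅) (hmono : ∀ S T, S ⊆ T → v S ≤ v T)
    (hsub : ∀ S T, v (S ∪ T) ≤ v S + v T) {p : α → ℝ} (hp : ∀ j, 0 ≤ p j) (O : Finset α) :
    ∃ c : α → ℝ, (∀ j, 0 ≤ c j) ∧ (∀ S, ∑ j ∈ S, c j ≤ v S) ∧
      v O - ∑ j ∈ O, p j ≤
        v (univ.filter fun j => p j ≤ c j) - ∑ j ∈ univ.filter (fun j => p j ≤ c j), p j := by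
  obtain ⟨T, -, hTdom, hOT⟩ := exists_subset_sum_le_and_utility_le hv₀ hsub p O
  obtain ⟨c, hc₀, hcdom, hTc⟩ := exists_bid_le_and_utility_le_of_sum_le hmono hp hTdom
  exact ⟨c, hc₀, hcdom, hOT.trans hTc⟩

end NoOverbidding

section SecondPrice

variable {n m : ℕ} {b : Fin n → Fin m → ℝ}

theorem maxOther_nonneg (i : Fin n) (j : Fin m) : 0 ≤ maxOther b i j :=
  NNReal.coe_nonneg _

theorem maxOther_le_maxAll (i : Fin n) (j : Fin m) : maxOther b i j ≤ maxAll b j := by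
  unfold maxOther maxAll
  exact_mod_cast sup_mono (erase_subset i univ)

theorem maxAll_eq_of_forall_le (hb : ∀ i j, 0 ≤ b i j) {alloc : Fin m → Fin n}
    (halloc : ∀ j k, b k j ≤ b (alloc j) j) (j : Fin m) : maxAll b j = b (alloc j) j := by
  have hsup : univ.sup (fun k => (b k j).toNNReal) = (b (alloc j) j).toNNReal :=
    le_antisymm (Finset.sup_le fun k _ => Real.toNNReal_mono (halloc j k))
      (Finset.le_sup (f := fun k => (b k j).toNNReal) (mem_univ (alloc j)))
  rw [maxAll, hsup, Real.coe_toNNReal _ (hb _ _)]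

theorem sum_maxAll_le_sum_value (v : Fin n → Finset (Fin m) → ℝ) (hb : ∀ i j, 0 ≤ b i j)
    (hdom : ∀ i (S : Finset (Fin m)), ∑ j ∈ S, b i j ≤ v i S) {alloc : Fin m → Fin n}
    (halloc : ∀ j k, b k j ≤ b (alloc j) j) :
    ∑ j, maxAll b j ≤ ∑ i, v i (univ.filter fun j => alloc j = i) :=
  calc ∑ j, maxAll b j = ∑ j, b (alloc j) j :=
        sum_congr rfl fun j _ => maxAll_eq_of_forall_le hb halloc j
    _ = ∑ i, ∑ j ∈ univ.filter (fun j => alloc j = i), b i j := by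
        rw [← sum_fiberwise univ alloc]
        exact sum_congr rfl fun i _ => sum_congr rfl fun j hj => by rw [(mem_filter.1 hj).2]
    _ ≤ ∑ i, v i (univ.filter fun j => alloc j = i) := sum_le_sum fun i _ => hdom i _

end SecondPrice

/-- Pure Nash equilibria of simultaneous second-price auctions under strong no-overbidding:
the welfare is at least `(1/2)·OPT − Σ_j max_k b_k(j)`, and consequently at least `OPT/4`.
Each item `j` goes to the highest bidder `alloc j`, who pays the second-highest bid on it;
deviations are restricted to nonnegative bid vectors dominated by the bidder's valuation. -/
theorem stmt11 (n m : ℕ) (v : Fin n → Finset (Fin m) → ℝ)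
    (hnn : ∀ i S, 0 ≤ v i S)
    (hmono : ∀ i (S T : Finset (Fin m)), S ⊆ T → v i S ≤ v i T)
    (hsub : ∀ i (S T : Finset (Fin m)), v i (S ∪ T) ≤ v i S + v i T)
    (b : Fin n → Fin m → ℝ) (hb : ∀ i j, 0 ≤ b i j)
    (hdom : ∀ i (S : Finset (Fin m)), ∑ j ∈ S, b i j ≤ v i S)
    (alloc : Fin m → Fin n)
    (halloc : ∀ j k, b k j ≤ b (alloc j) j)
    (hNE : ∀ i (c : Fin m → ℝ), (∀ j, 0 ≤ c j) →
      (∀ S : Finset (Fin m), ∑ j ∈ S, c j ≤ v i S) →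
      v i (Finset.univ.filter fun j => maxOther b i j ≤ c j) -
          (∑ j ∈ Finset.univ.filter fun j => maxOther b i j ≤ c j, maxOther b i j) ≤
        v i (Finset.univ.filter fun j => alloc j = i) -
          (∑ j ∈ Finset.univ.filter fun j => alloc j = i, maxOther b i j))
    (O : Fin n → Finset (Fin m))
    (hdisj : ∀ i k : Fin n, i ≠ k → Disjoint (O i) (O k))
    (hcover : Finset.univ.biUnion O = Finset.univ) :
    (1 / 2) * (∑ i, v i (O i)) - (∑ j, maxAll b j) ≤
        ∑ i, v i (Finset.univ.filter fun j => alloc j = i) ∧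
      ∑ i, v i (O i) ≤ 4 * ∑ i, v i (Finset.univ.filter fun j => alloc j = i) := by
  set W : Fin n → Finset (Fin m) := fun i => univ.filter fun j => alloc j = i
  have hdeviation (i : Fin n) : v i (O i) - ∑ j ∈ O i, maxAll b j ≤ v i (W i) := by
    obtain ⟨c, hc₀, hcdom, hOc⟩ := exists_bid_le_and_utility_le (hnn i ∅) (hmono i) (hsub i)
      (maxOther_nonneg (b := b) i) (O i)
    have hpaid : 0 ≤ ∑ j ∈ W i, maxOther b i j := sum_nonneg fun j _ => maxOther_nonneg i j
    have hprice : ∑ j ∈ O i, maxOther b i j ≤ ∑ j ∈ O i, maxAll b j :=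
      sum_le_sum fun j _ => maxOther_le_maxAll i j
    linarith [hNE i c hc₀ hcdom]
  have hpartition : ∑ i, ∑ j ∈ O i, maxAll b j = ∑ j, maxAll b j := by
    rw [← sum_biUnion fun i _ k _ hik => hdisj i k hik, hcover]
  have hopt : ∑ i, v i (O i) - ∑ j, maxAll b j ≤ ∑ i, v i (W i) := by
    rw [← hpartition, ← sum_sub_distrib]
    exact sum_le_sum fun i _ => hdeviation i
  have hbids := sum_maxAll_le_sum_value v hb hdom halloc
  have hOnn : 0 ≤ ∑ i, v i (O i) := sum_nonneg fun i _ => hnn i (O i)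
  constructor <;> linarith
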